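/- If a simplicial complex C reduces to a subcomplex C' by non-evasiveness steps (C ↘_NE C'), then for every non-negative integer m, the m-th derived (barycentric) subdivision satisfies sd^m(C) ↘_NE sd^m(C'). In particular, the derived subdivision of a non-evasive complex is non-evasive. -/
import Mathlib


/-- An (abstract, finite) simplicial complex on the vertex set `ℕ`. -/
def IsComplex (C : Finset (Finset ℕ)) : Prop :=
  ∀ σ ∈ C, σ.Nonempty ∧ ∀ τ ⊆ σ, τ.Nonempty → τ ∈ C

/-- The link of a vertex `v` in `C`. -/
def lkv (v : ℕ) (C : Finset (Finset ℕ)) : Finset (Finset ℕ) :=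
  C.filter fun σ => v ∉ σ ∧ insert v σ ∈ C

/-- The deletion of a vertex `v` from `C`. -/
def delv (v : ℕ) (C : Finset (Finset ℕ)) : Finset (Finset ℕ) :=
  C.filter fun σ => v ∉ σ

/-- Non-evasiveness, defined recursively. -/
inductive NonEvasive : Finset (Finset ℕ) → Prop
  | point (v : ℕ) : NonEvasive {({v} : Finset ℕ)}
  | step (C : Finset (Finset ℕ)) (v : ℕ) (hv : ({v} : Finset ℕ) ∈ C)
      (hlk : NonEvasive (lkv v C)) (hdel : NonEvasive (delv v C)) : NonEvasive C

/-- A fixed injective encoding of finite sets of naturals by naturals, used to give the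
derived subdivision vertex set `ℕ` again. -/
def fenc : Finset ℕ → ℕ := fun s => Encodable.encode s

/-- The derived (barycentric) subdivision: vertices of `sd C` correspond to the (nonempty)
faces of `C`, and the faces of `sd C` correspond to chains of faces of `C` under inclusion. -/
def sd (C : Finset (Finset ℕ)) : Finset (Finset ℕ) :=
  (C.powerset.filter fun S => S.Nonempty ∧ ∀ σ ∈ S, ∀ τ ∈ S, σ ⊆ τ ∨ τ ⊆ σ).image
    fun S => S.image fenc

/-- A non-evasiveness step: deletion of a vertex whose link is non-evasive. -/
def NEStep (C C' : Finset (Finset ℕ)) : Prop :=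
  ∃ v : ℕ, ({v} : Finset ℕ) ∈ C ∧ NonEvasive (lkv v C) ∧ C' = delv v C

/-- `C ↘_NE C'` : `C'` is obtained from `C` by a sequence of non-evasiveness steps. -/
def NERed : Finset (Finset ℕ) → Finset (Finset ℕ) → Prop :=
  Relation.ReflTransGen NEStep

/-! ### Basics -/

lemma fenc_inj : Function.Injective fenc := fun _ _ h => Encodable.encode_injective h

lemma fenc_image_inj : Function.Injective (Finset.image fenc) :=
  Finset.image_injective fenc_inj

def Chn (S : Finset (Finset ℕ)) : Prop := ∀ σ ∈ S, ∀ τ ∈ S, σ ⊆ τ ∨ τ ⊆ σ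

lemma mem_sd {C s} : s ∈ sd C ↔ ∃ S, S ⊆ C ∧ S.Nonempty ∧ Chn S ∧ s = S.image fenc := by
  simp only [sd, Finset.mem_image, Finset.mem_filter, Finset.mem_powerset, Chn]
  constructor
  · rintro ⟨S, ⟨h1, h2, h3⟩, h4⟩; exact ⟨S, h1, h2, h3, h4.symm⟩
  · rintro ⟨S, h1, h2, h3, h4⟩; exact ⟨S, ⟨h1, h2, h3⟩, h4.symm⟩

lemma mem_lkv {v C σ} : σ ∈ lkv v C ↔ σ ∈ C ∧ v ∉ σ ∧ insert v σ ∈ C := by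
  simp [lkv]

lemma mem_delv {v C σ} : σ ∈ delv v C ↔ σ ∈ C ∧ v ∉ σ := by simp [delv]

lemma isComplex_lkv {v C} (hC : IsComplex C) : IsComplex (lkv v C) := by
  intro σ hσ
  rw [mem_lkv] at hσ
  obtain ⟨h1, h2, h3⟩ := hσ
  refine ⟨(hC σ h1).1, fun τ hτ hτne => ?_⟩
  rw [mem_lkv]
  refine ⟨(hC σ h1).2 τ hτ hτne, fun hv => h2 (hτ hv), ?_⟩
  exact (hC _ h3).2 _ (Finset.insert_subset_insert _ hτ) ⟨v, Finset.mem_insert_self _ _⟩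

lemma isComplex_delv {v C} (hC : IsComplex C) : IsComplex (delv v C) := by
  intro σ hσ
  rw [mem_delv] at hσ
  refine ⟨(hC σ hσ.1).1, fun τ hτ hτne => ?_⟩
  rw [mem_delv]
  exact ⟨(hC σ hσ.1).2 τ hτ hτne, fun hv => hσ.2 (hτ hv)⟩

lemma isComplex_sd {C} : IsComplex (sd C) := by
  intro s hs
  rw [mem_sd] at hs
  obtain ⟨S, hS, hne, hch, rfl⟩ := hs
  refine ⟨hne.image _, fun t ht htne => ?_⟩
  rw [mem_sd]
  refine ⟨S.filter (fun τ => fenc τ ∈ t), fun τ hτ => hS (Finset.mem_filter.1 hτ).1,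
    ?_, fun σ hσ τ hτ => hch σ (Finset.mem_filter.1 hσ).1 τ (Finset.mem_filter.1 hτ).1, ?_⟩
  · obtain ⟨x, hx⟩ := htne
    obtain ⟨τ, hτ, rfl⟩ := Finset.mem_image.1 (ht hx)
    exact ⟨τ, Finset.mem_filter.2 ⟨hτ, hx⟩⟩
  · ext x
    simp only [Finset.mem_image, Finset.mem_filter]
    constructor
    · rintro hx
      obtain ⟨τ, hτ, rfl⟩ := Finset.mem_image.1 (ht hx)
      exact ⟨τ, ⟨hτ, hx⟩, rfl⟩
    · rintro ⟨τ, ⟨_, h⟩, rfl⟩; exact h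

/-! ### Cones are non-evasive -/

lemma insert_comm' (a b : ℕ) (s : Finset ℕ) : insert a (insert b s) = insert b (insert a s) := by
  ext x; simp; tauto

lemma cone_ne_aux : ∀ n : ℕ, ∀ D : Finset (Finset ℕ), D.card ≤ n → IsComplex D → D.Nonempty →
    ∀ a, (∀ σ ∈ D, insert a σ ∈ D) → NonEvasive D := by
  intro n
  induction n with
  | zero =>
    intro D hcard _ hne a _
    obtain ⟨σ, hσ⟩ := hne
    simp [Finset.card_eq_zero.1 (Nat.le_zero.1 hcard)] at hσ
  | succ n ih =>
    intro D hcard hD hne a hcone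
    have haD : ({a} : Finset ℕ) ∈ D := by
      obtain ⟨σ, hσ⟩ := hne
      have h1 := hcone σ hσ
      exact (hD _ h1).2 {a} (by simp) ⟨a, Finset.mem_singleton_self a⟩
    by_cases hpt : D = {({a} : Finset ℕ)}
    · rw [hpt]; exact NonEvasive.point a
    · -- find a vertex w ≠ a
      have : ∃ σ ∈ D, σ ≠ ({a} : Finset ℕ) := by
        by_contra hc
        push_neg at hc
        exact hpt (Finset.eq_singleton_iff_unique_mem.2 ⟨haD, hc⟩)
      obtain ⟨σ, hσD, hσa⟩ := this
      have : ∃ w ∈ σ, w ≠ a := by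
        by_contra hc
        push_neg at hc
        apply hσa
        apply Finset.Subset.antisymm (fun x hx => Finset.mem_singleton.2 (hc x hx))
        intro x hx
        obtain ⟨y, hy⟩ := (hD σ hσD).1
        rw [Finset.mem_singleton] at hx
        rw [hx, ← hc y hy]; exact hy
      obtain ⟨w, hwσ, hwa⟩ := this
      have hwD : ({w} : Finset ℕ) ∈ D := (hD σ hσD).2 {w} (by simp [hwσ]) ⟨w, by simp⟩
      have hwlk : ({w} : Finset ℕ) ∉ lkv w D := by simp [mem_lkv]
      have hwdel : ({w} : Finset ℕ) ∉ delv w D := by simp [mem_delv]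
      have hlksub : lkv w D ⊆ D.erase {w} := fun τ hτ => by
        rw [mem_lkv] at hτ
        refine Finset.mem_erase.2 ⟨?_, hτ.1⟩
        rintro rfl; exact hτ.2.1 (by simp)
      have hdelsub : delv w D ⊆ D.erase {w} := fun τ hτ => by
        rw [mem_delv] at hτ
        refine Finset.mem_erase.2 ⟨?_, hτ.1⟩
        rintro rfl; exact hτ.2 (by simp)
      have hcards : (D.erase {w}).card ≤ n := by
        have := Finset.card_erase_lt_of_mem hwD
        omega
      refine NonEvasive.step D w hwD ?_ ?_
      · -- link is a cone over a
        refine ih _ (le_trans (Finset.card_le_card hlksub) hcards) (isComplex_lkv hD) ?_ a ?_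
        · refine ⟨{a}, ?_⟩
          rw [mem_lkv]
          refine ⟨haD, by simp only [Finset.mem_singleton]; exact hwa, ?_⟩
          have : insert w ({a} : Finset ℕ) = insert a {w} := by ext x; simp; tauto
          rw [this]; exact hcone _ hwD
        · intro τ hτ
          rw [mem_lkv] at hτ ⊢
          obtain ⟨h1, h2, h3⟩ := hτ
          refine ⟨hcone _ h1, by simp only [Finset.mem_insert]; tauto, ?_⟩
          rw [insert_comm']
          exact hcone _ h3
      · refine ih _ (le_trans (Finset.card_le_card hdelsub) hcards) (isComplex_delv hD) ?_ a ?_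
        · exact ⟨{a}, mem_delv.2 ⟨haD, by simp only [Finset.mem_singleton]; exact hwa⟩⟩
        · intro τ hτ
          rw [mem_delv] at hτ ⊢
          exact ⟨hcone _ hτ.1, by simp only [Finset.mem_insert]; have := hτ.2; tauto⟩

lemma cone_ne {D : Finset (Finset ℕ)} (hD : IsComplex D) (hne : D.Nonempty) (a : ℕ)
    (hcone : ∀ σ ∈ D, insert a σ ∈ D) : NonEvasive D :=
  cone_ne_aux D.card D le_rfl hD hne a hcone

/-! ### Relabeling vertices preserves non-evasiveness -/

def InD (D : Finset (Finset ℕ)) (x : ℕ) : Prop := ∃ σ ∈ D, x ∈ σ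

lemma imgS_inj {f : ℕ → ℕ} {D : Finset (Finset ℕ)}
    (hinj : ∀ x y, InD D x → InD D y → f x = f y → x = y)
    {S T : Finset ℕ} (hS : ∀ x ∈ S, InD D x) (hT : ∀ x ∈ T, InD D x)
    (h : S.image f = T.image f) : S = T := by
  ext x
  constructor
  · intro hx
    have : f x ∈ T.image f := h ▸ Finset.mem_image_of_mem f hx
    obtain ⟨y, hy, hfy⟩ := Finset.mem_image.1 this
    rwa [hinj y x (hT y hy) (hS x hx) hfy] at hy
  · intro hx
    have : f x ∈ S.image f := h.symm ▸ Finset.mem_image_of_mem f hx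
    obtain ⟨y, hy, hfy⟩ := Finset.mem_image.1 this
    rwa [hinj y x (hS y hy) (hT x hx) hfy] at hy

lemma map_delv {f : ℕ → ℕ} {D : Finset (Finset ℕ)} {v : ℕ}
    (hinj : ∀ x y, InD D x → InD D y → f x = f y → x = y) (hv : ({v} : Finset ℕ) ∈ D) :
    delv (f v) (D.image (Finset.image f)) = (delv v D).image (Finset.image f) := by
  have hvD : InD D v := ⟨{v}, hv, by simp⟩
  ext s
  rw [mem_delv]
  simp only [Finset.mem_image]
  constructor
  · rintro ⟨⟨σ, hσ, rfl⟩, hfv⟩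
    refine ⟨σ, mem_delv.2 ⟨hσ, fun hvσ => hfv (Finset.mem_image_of_mem f hvσ)⟩, rfl⟩
  · rintro ⟨σ, hσ, rfl⟩
    rw [mem_delv] at hσ
    refine ⟨⟨σ, hσ.1, rfl⟩, fun hfv => ?_⟩
    obtain ⟨x, hx, hfx⟩ := Finset.mem_image.1 hfv
    exact hσ.2 (hinj x v ⟨σ, hσ.1, hx⟩ hvD hfx ▸ hx)

lemma map_lkv {f : ℕ → ℕ} {D : Finset (Finset ℕ)} {v : ℕ}
    (hinj : ∀ x y, InD D x → InD D y → f x = f y → x = y) (hv : ({v} : Finset ℕ) ∈ D) :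
    lkv (f v) (D.image (Finset.image f)) = (lkv v D).image (Finset.image f) := by
  have hvD : InD D v := ⟨{v}, hv, by simp⟩
  ext s
  rw [mem_lkv]
  simp only [Finset.mem_image]
  constructor
  · rintro ⟨⟨σ, hσ, rfl⟩, hfv, hins⟩
    have hvσ : v ∉ σ := fun hvσ => hfv (Finset.mem_image_of_mem f hvσ)
    obtain ⟨ρ, hρ, hρeq⟩ := hins
    rw [← Finset.image_insert] at hρeq
    have : ρ = insert v σ := by
      refine imgS_inj hinj (fun x hx => ⟨ρ, hρ, hx⟩) ?_ hρeq
      intro x hx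
      rcases Finset.mem_insert.1 hx with rfl | hx
      · exact hvD
      · exact ⟨σ, hσ, hx⟩
    refine ⟨σ, mem_lkv.2 ⟨hσ, hvσ, this ▸ hρ⟩, rfl⟩
  · rintro ⟨σ, hσ, rfl⟩
    rw [mem_lkv] at hσ
    obtain ⟨h1, h2, h3⟩ := hσ
    refine ⟨⟨σ, h1, rfl⟩, fun hfv => ?_, ?_⟩
    · obtain ⟨x, hx, hfx⟩ := Finset.mem_image.1 hfv
      exact h2 (hinj x v ⟨σ, h1, hx⟩ hvD hfx ▸ hx)
    · exact ⟨insert v σ, h3, Finset.image_insert f v σ⟩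

lemma InD_mono {D D' : Finset (Finset ℕ)} (h : D' ⊆ D) {x : ℕ} : InD D' x → InD D x := by
  rintro ⟨σ, hσ, hx⟩; exact ⟨σ, h hσ, hx⟩

lemma relabel_NE (f : ℕ → ℕ) {D : Finset (Finset ℕ)} (h : NonEvasive D) :
    (∀ x y, InD D x → InD D y → f x = f y → x = y) →
    NonEvasive (D.image (Finset.image f)) := by
  induction h with
  | point v =>
    intro _
    rw [Finset.image_singleton, Finset.image_singleton]
    exact NonEvasive.point (f v)
  | step D v hv hlk hdel ihlk ihdel =>
    intro hinj
    refine NonEvasive.step _ (f v) ?_ ?_ ?_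
    · exact Finset.mem_image.2 ⟨{v}, hv, Finset.image_singleton f v⟩
    · rw [map_lkv hinj hv]
      exact ihlk (fun x y hx hy => hinj x y (InD_mono (Finset.filter_subset _ _) hx)
        (InD_mono (Finset.filter_subset _ _) hy))
    · rw [map_delv hinj hv]
      exact ihdel (fun x y hx hy => hinj x y (InD_mono (Finset.filter_subset _ _) hx)
        (InD_mono (Finset.filter_subset _ _) hy))

/-! ### The deletion process on `sd C` -/

def Ecplx (C T : Finset (Finset ℕ)) : Finset (Finset ℕ) :=
  (sd C).filter fun s => ∀ τ ∈ T, fenc τ ∉ s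

lemma mem_E {C T s} : s ∈ Ecplx C T ↔
    ∃ S, S ⊆ C ∧ S.Nonempty ∧ Chn S ∧ (∀ τ ∈ T, τ ∉ S) ∧ s = S.image fenc := by
  rw [Ecplx, Finset.mem_filter, mem_sd]
  constructor
  · rintro ⟨⟨S, h1, h2, h3, rfl⟩, h5⟩
    refine ⟨S, h1, h2, h3, fun τ hτ hτS => h5 τ hτ (Finset.mem_image_of_mem fenc hτS), rfl⟩
  · rintro ⟨S, h1, h2, h3, h4, rfl⟩
    refine ⟨⟨S, h1, h2, h3, rfl⟩, fun τ hτ hmem => ?_⟩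
    obtain ⟨ρ, hρ, hρe⟩ := Finset.mem_image.1 hmem
    exact h4 τ hτ (fenc_inj hρe ▸ hρ)

lemma E_empty {C} : Ecplx C ∅ = sd C := by
  simp [Ecplx]

lemma E_full {C : Finset (Finset ℕ)} {v : ℕ} :
    Ecplx C (C.filter fun σ => v ∈ σ) = sd (delv v C) := by
  ext s
  rw [mem_E, mem_sd]
  constructor
  · rintro ⟨S, h1, h2, h3, h4, rfl⟩
    refine ⟨S, fun τ hτ => mem_delv.2 ⟨h1 hτ, fun hv => h4 τ (Finset.mem_filter.2 ⟨h1 hτ, hv⟩) hτ⟩,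
      h2, h3, rfl⟩
  · rintro ⟨S, h1, h2, h3, rfl⟩
    refine ⟨S, fun τ hτ => (mem_delv.1 (h1 hτ)).1, h2, h3, fun τ hτ hτS => ?_, rfl⟩
    exact (mem_delv.1 (h1 hτS)).2 (Finset.mem_filter.1 hτ).2

lemma isComplex_E {C T} : IsComplex (Ecplx C T) := by
  intro s hs
  rw [Ecplx, Finset.mem_filter] at hs
  refine ⟨(isComplex_sd s hs.1).1, fun t ht htne => ?_⟩
  rw [Ecplx, Finset.mem_filter]
  exact ⟨(isComplex_sd s hs.1).2 t ht htne, fun τ hτ hmem => hs.2 τ hτ (ht hmem)⟩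

lemma delv_E {C T : Finset (Finset ℕ)} {σ : Finset ℕ} :
    delv (fenc σ) (Ecplx C T) = Ecplx C (insert σ T) := by
  ext s
  rw [mem_delv, Ecplx, Ecplx, Finset.mem_filter, Finset.mem_filter]
  constructor
  · rintro ⟨⟨h1, h2⟩, h3⟩
    refine ⟨h1, fun τ hτ => ?_⟩
    rcases Finset.mem_insert.1 hτ with rfl | hτ
    · exact h3
    · exact h2 τ hτ
  · rintro ⟨h1, h2⟩
    exact ⟨⟨h1, fun τ hτ => h2 τ (Finset.mem_insert_of_mem hτ)⟩,
      h2 σ (Finset.mem_insert_self _ _)⟩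

lemma Chn_insert {S : Finset (Finset ℕ)} {σ : Finset ℕ} (hS : Chn S)
    (hcomp : ∀ τ ∈ S, τ ⊆ σ ∨ σ ⊆ τ) : Chn (insert σ S) := by
  intro τ hτ ρ hρ
  rcases Finset.mem_insert.1 hτ with h | h <;> rcases Finset.mem_insert.1 hρ with h' | h'
  · rw [h, h']; left; rfl
  · rw [h]; exact (hcomp ρ h').symm
  · rw [h']; exact hcomp τ h
  · exact hS τ h ρ h'

lemma mem_lk_E {C T : Finset (Finset ℕ)} {σ : Finset ℕ} (hσC : σ ∈ C) (hσT : σ ∉ T) {s} :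
    s ∈ lkv (fenc σ) (Ecplx C T) ↔
    ∃ S, S ⊆ C ∧ S.Nonempty ∧ Chn S ∧ (∀ τ ∈ T, τ ∉ S) ∧ σ ∉ S ∧
      (∀ τ ∈ S, τ ⊆ σ ∨ σ ⊆ τ) ∧ s = S.image fenc := by
  rw [mem_lkv]
  constructor
  · rintro ⟨h1, h2, h3⟩
    obtain ⟨S, hS1, hS2, hS3, hS4, rfl⟩ := mem_E.1 h1
    have hσS : σ ∉ S := fun hσ => h2 (Finset.mem_image_of_mem fenc hσ)
    obtain ⟨S₀, hS01, hS02, hS03, hS04, hS0e⟩ := mem_E.1 h3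
    have : S₀ = insert σ S := by
      apply fenc_image_inj
      rw [← hS0e, Finset.image_insert]
    subst this
    refine ⟨S, hS1, hS2, hS3, hS4, hσS, fun τ hτ => ?_, rfl⟩
    exact hS03 τ (Finset.mem_insert_of_mem hτ) σ (Finset.mem_insert_self _ _) |>.imp id id
  · rintro ⟨S, h1, h2, h3, h4, h5, h6, rfl⟩
    refine ⟨mem_E.2 ⟨S, h1, h2, h3, h4, rfl⟩, fun hmem => ?_, ?_⟩
    · obtain ⟨ρ, hρ, hρe⟩ := Finset.mem_image.1 hmem
      exact h5 (fenc_inj hρe ▸ hρ)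
    · rw [← Finset.image_insert]
      refine mem_E.2 ⟨insert σ S, Finset.insert_subset hσC h1, ⟨σ, Finset.mem_insert_self _ _⟩,
        Chn_insert h3 h6, fun τ hτ hτS => ?_, rfl⟩
      rcases Finset.mem_insert.1 hτS with rfl | hτS
      · exact hσT hτ
      · exact h4 τ hτ hτS

lemma erase_nonempty_of_ne {σ : Finset ℕ} {v : ℕ} (hv : v ∈ σ) (hne : σ ≠ {v}) :
    (σ.erase v).Nonempty := by
  rw [Finset.nonempty_iff_ne_empty]
  intro h
  apply hne
  apply Finset.eq_singleton_iff_unique_mem.2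
  refine ⟨hv, fun x hx => ?_⟩
  by_contra hxv
  exact Finset.notMem_empty x (h ▸ Finset.mem_erase.2 ⟨hxv, hx⟩)

lemma link_cone {C T : Finset (Finset ℕ)} {v : ℕ} {σ : Finset ℕ} (hC : IsComplex C)
    (hσC : σ ∈ C) (hvσ : v ∈ σ) (hσv : σ ≠ {v})
    (hTV : ∀ τ ∈ T, v ∈ τ) (hσT : σ ∉ T)
    (hsub : ∀ τ ∈ C, v ∈ τ → τ ⊂ σ → τ ∈ T) :
    NonEvasive (lkv (fenc σ) (Ecplx C T)) := by
  set a : Finset ℕ := σ.erase v with ha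
  have hane : a.Nonempty := erase_nonempty_of_ne hvσ hσv
  have haC : a ∈ C := (hC σ hσC).2 a (Finset.erase_subset v σ) hane
  have haT : a ∉ T := fun h => (Finset.notMem_erase v σ) (hTV a h)
  have haσ : a ≠ σ := fun h => (Finset.notMem_erase v σ) (by rw [show σ.erase v = a from rfl, h]; exact hvσ)
  refine cone_ne (isComplex_lkv isComplex_E) ?_ (fenc a) ?_
  · refine ⟨{fenc a}, (mem_lk_E hσC hσT).2 ⟨{a}, by simp [haC], ⟨a, by simp⟩,
      by intro x hx y hy; simp_all, ?_, by simp only [Finset.mem_singleton]; exact fun h => haσ h.symm, ?_, by simp⟩⟩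
    · intro τ hτ hτa
      rw [Finset.mem_singleton] at hτa
      exact haT (hτa ▸ hτ)
    · intro τ hτ
      rw [Finset.mem_singleton] at hτ
      exact Or.inl (hτ ▸ Finset.erase_subset v σ)
  · intro s hs
    obtain ⟨S, h1, h2, h3, h4, h5, h6, rfl⟩ := (mem_lk_E hσC hσT).1 hs
    have hcompa : ∀ τ ∈ S, τ ⊆ a ∨ a ⊆ τ := by
      intro τ hτ
      rcases h6 τ hτ with h | h
      · left
        have hss : τ ⊂ σ := Finset.ssubset_iff_subset_ne.2 ⟨h, fun he => h5 (he ▸ hτ)⟩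
        have hvτ : v ∉ τ := fun hvτ => h4 τ (hsub τ (h1 hτ) hvτ hss) hτ
        exact Finset.subset_erase.2 ⟨h, hvτ⟩
      · exact Or.inr ((Finset.erase_subset v σ).trans h)
    rw [← Finset.image_insert]
    refine (mem_lk_E hσC hσT).2 ⟨insert a S, Finset.insert_subset haC h1,
      ⟨a, Finset.mem_insert_self _ _⟩, Chn_insert h3 hcompa, ?_, ?_, ?_, rfl⟩
    · intro τ hτ hτS
      rcases Finset.mem_insert.1 hτS with h | h
      · exact haT (h ▸ hτ)
      · exact h4 τ hτ h
    · intro h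
      rcases Finset.mem_insert.1 h with h | h
      · exact haσ h.symm
      · exact h5 h
    · intro τ hτ
      rcases Finset.mem_insert.1 hτ with h | h
      · exact Or.inl (h ▸ Finset.erase_subset v σ)
      · exact h6 τ h

/-! ### The link of the barycenter of `{v}` -/

def fvmap (v : ℕ) : ℕ → ℕ :=
  fun n => fenc (insert v (((Encodable.decode n : Option (Finset ℕ))).getD ∅))

lemma fvmap_fenc (v : ℕ) (ρ : Finset ℕ) : fvmap v (fenc ρ) = fenc (insert v ρ) := by
  simp [fvmap, fenc, Encodable.encodek]

lemma vert_sd {D : Finset (Finset ℕ)} {x : ℕ} (h : InD (sd D) x) : ∃ ρ ∈ D, x = fenc ρ := by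
  obtain ⟨s, hs, hx⟩ := h
  obtain ⟨S, h1, _, _, rfl⟩ := mem_sd.1 hs
  obtain ⟨ρ, hρ, rfl⟩ := Finset.mem_image.1 hx
  exact ⟨ρ, h1 hρ, rfl⟩

lemma fvmap_injOn {D : Finset (Finset ℕ)} {v : ℕ} (hD : ∀ ρ ∈ D, v ∉ ρ) :
    ∀ x y, InD (sd D) x → InD (sd D) y → fvmap v x = fvmap v y → x = y := by
  intro x y hx hy hxy
  obtain ⟨ρ, hρ, rfl⟩ := vert_sd hx
  obtain ⟨ρ', hρ', rfl⟩ := vert_sd hy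
  rw [fvmap_fenc, fvmap_fenc] at hxy
  have h := fenc_inj hxy
  have : ρ = ρ' := by
    rw [← Finset.erase_insert (hD ρ hρ), ← Finset.erase_insert (hD ρ' hρ'), h]
  rw [this]

lemma link_v_eq {C : Finset (Finset ℕ)} {v : ℕ} (hC : IsComplex C) (hv : ({v} : Finset ℕ) ∈ C) :
    lkv (fenc {v}) (Ecplx C ∅) =
      (sd (lkv v C)).image (Finset.image (fvmap v)) := by
  ext s
  rw [mem_lk_E hv (Finset.notMem_empty _)]
  simp only [Finset.mem_image]
  constructor
  · rintro ⟨S, h1, h2, h3, -, h5, h6, rfl⟩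
    have hmem : ∀ τ ∈ S, v ∈ τ ∧ τ ≠ ({v} : Finset ℕ) := by
      intro τ hτ
      have hne : τ ≠ ({v} : Finset ℕ) := fun h => h5 (h ▸ hτ)
      rcases h6 τ hτ with h | h
      · exact absurd (Finset.Nonempty.subset_singleton_iff (hC τ (h1 hτ)).1 |>.1 h) hne
      · exact ⟨h (Finset.mem_singleton_self v), hne⟩
    refine ⟨(S.image (fun τ => τ.erase v)).image fenc, mem_sd.2
      ⟨S.image (fun τ => τ.erase v), ?_, h2.image _, ?_, rfl⟩, ?_⟩
    · intro ρ hρ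
      obtain ⟨τ, hτ, rfl⟩ := Finset.mem_image.1 hρ
      obtain ⟨hvτ, hτne⟩ := hmem τ hτ
      rw [mem_lkv]
      refine ⟨(hC τ (h1 hτ)).2 _ (Finset.erase_subset v τ) (erase_nonempty_of_ne hvτ hτne),
        Finset.notMem_erase v τ, ?_⟩
      rw [Finset.insert_erase hvτ]
      exact h1 hτ
    · intro ρ hρ ρ' hρ'
      obtain ⟨τ, hτ, rfl⟩ := Finset.mem_image.1 hρ
      obtain ⟨τ', hτ', rfl⟩ := Finset.mem_image.1 hρ'
      rcases h3 τ hτ τ' hτ' with h | h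
      · exact Or.inl (Finset.erase_subset_erase v h)
      · exact Or.inr (Finset.erase_subset_erase v h)
    · rw [Finset.image_image, Finset.image_image]
      apply Finset.image_congr
      intro τ hτ
      simp only [Function.comp_apply]
      rw [fvmap_fenc, Finset.insert_erase (hmem τ hτ).1]
  · rintro ⟨t, ht, rfl⟩
    obtain ⟨S', h1, h2, h3, rfl⟩ := mem_sd.1 ht
    have himg : (S'.image fenc).image (fvmap v) = (S'.image (insert v)).image fenc := by
      rw [Finset.image_image, Finset.image_image]
      apply Finset.image_congr
      intro ρ _
      simp only [Function.comp_apply]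
      rw [fvmap_fenc]
    refine ⟨S'.image (insert v), ?_, h2.image _, ?_, fun τ hτ => absurd hτ
      (Finset.notMem_empty τ), ?_, ?_, himg⟩
    · intro τ hτ
      obtain ⟨ρ, hρ, rfl⟩ := Finset.mem_image.1 hτ
      exact (mem_lkv.1 (h1 hρ)).2.2
    · intro τ hτ τ' hτ'
      obtain ⟨ρ, hρ, rfl⟩ := Finset.mem_image.1 hτ
      obtain ⟨ρ', hρ', rfl⟩ := Finset.mem_image.1 hτ'
      rcases h3 ρ hρ ρ' hρ' with h | h
      · exact Or.inl (Finset.insert_subset_insert v h)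
      · exact Or.inr (Finset.insert_subset_insert v h)
    · intro h
      obtain ⟨ρ, hρ, hρe⟩ := Finset.mem_image.1 h
      have hρC : ρ ∈ C := (mem_lkv.1 (h1 hρ)).1
      have hvρ : v ∉ ρ := (mem_lkv.1 (h1 hρ)).2.1
      obtain ⟨x, hx⟩ := (hC ρ hρC).1
      have : x ∈ ({v} : Finset ℕ) := hρe ▸ Finset.mem_insert_of_mem hx
      rw [Finset.mem_singleton] at this
      exact hvρ (this ▸ hx)
    · intro τ hτ
      obtain ⟨ρ, _, rfl⟩ := Finset.mem_image.1 hτ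
      exact Or.inr (Finset.singleton_subset_iff.2 (Finset.mem_insert_self v ρ))

/-! ### The main reduction -/

lemma red_aux {C : Finset (Finset ℕ)} {v : ℕ} (hC : IsComplex C) (hv : ({v} : Finset ℕ) ∈ C)
    (hne : NonEvasive (sd (lkv v C))) :
    ∀ n (T : Finset (Finset ℕ)), T ⊆ C.filter (fun σ => v ∈ σ) →
      (∀ ρ ∈ T, ∀ τ ∈ C.filter (fun σ => v ∈ σ), τ ⊆ ρ → τ ∈ T) →
      ((C.filter fun σ => v ∈ σ) \ T).card ≤ n →
      NERed (Ecplx C T) (Ecplx C (C.filter fun σ => v ∈ σ)) := by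
  intro n
  induction n with
  | zero =>
    intro T hTV _ hcard
    have h0 : (C.filter fun σ => v ∈ σ) \ T = ∅ := Finset.card_eq_zero.1 (Nat.le_zero.1 hcard)
    have : T = C.filter fun σ => v ∈ σ :=
      Finset.Subset.antisymm hTV (Finset.sdiff_eq_empty_iff_subset.1 h0)
    rw [this]
    exact Relation.ReflTransGen.refl
  | succ n ih =>
    intro T hTV hdc hcard
    by_cases hVT : (C.filter fun σ => v ∈ σ) ⊆ T
    · rw [Finset.Subset.antisymm hTV hVT]
      exact Relation.ReflTransGen.refl
    · have hne' : ((C.filter fun σ => v ∈ σ) \ T).Nonempty := by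
        rw [Finset.sdiff_nonempty]; exact hVT
      obtain ⟨σ, hσ, hmin⟩ := Finset.exists_min_image _ Finset.card hne'
      obtain ⟨hσV, hσT⟩ := Finset.mem_sdiff.1 hσ
      obtain ⟨hσC, hvσ⟩ := Finset.mem_filter.1 hσV
      have hsub : ∀ τ ∈ C, v ∈ τ → τ ⊂ σ → τ ∈ T := by
        intro τ hτC hvτ hss
        by_contra hτT
        have h1 := hmin τ (Finset.mem_sdiff.2 ⟨Finset.mem_filter.2 ⟨hτC, hvτ⟩, hτT⟩)
        have h2 := Finset.card_lt_card hss
        omega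
      have hstep : NEStep (Ecplx C T) (Ecplx C (insert σ T)) := by
        refine ⟨fenc σ, ?_, ?_, delv_E.symm⟩
        · refine mem_E.2 ⟨{σ}, by simp [hσC], ⟨σ, by simp⟩, by intro x hx y hy; simp_all,
            fun τ hτ hτσ => ?_, by simp⟩
          rw [Finset.mem_singleton] at hτσ
          exact hσT (hτσ ▸ hτ)
        · by_cases hσv : σ = ({v} : Finset ℕ)
          · have hT0 : T = ∅ := by
              rw [Finset.eq_empty_iff_forall_notMem]
              intro ρ hρ
              have hvρ : v ∈ ρ := (Finset.mem_filter.1 (hTV hρ)).2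
              have : ({v} : Finset ℕ) ∈ T :=
                hdc ρ hρ {v} (Finset.mem_filter.2 ⟨hv, Finset.mem_singleton_self v⟩)
                  (Finset.singleton_subset_iff.2 hvρ)
              exact hσT (hσv ▸ this)
            rw [hσv, hT0, link_v_eq hC hv]
            exact relabel_NE _ hne (fvmap_injOn (fun ρ hρ => (mem_lkv.1 hρ).2.1))
          · exact link_cone hC hσC hvσ hσv (fun τ hτ => (Finset.mem_filter.1 (hTV hτ)).2)
              hσT hsub
      have htail : NERed (Ecplx C (insert σ T)) (Ecplx C (C.filter fun σ => v ∈ σ)) := by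
        refine ih (insert σ T) (Finset.insert_subset hσV hTV) ?_ ?_
        · intro ρ hρ τ hτV hτρ
          rcases Finset.mem_insert.1 hρ with h | h
          · subst h
            by_cases hτσ : τ = ρ
            · exact hτσ ▸ Finset.mem_insert_self _ _
            · exact Finset.mem_insert_of_mem (hsub τ (Finset.mem_filter.1 hτV).1
                (Finset.mem_filter.1 hτV).2 (Finset.ssubset_iff_subset_ne.2 ⟨hτρ, hτσ⟩))
          · exact Finset.mem_insert_of_mem (hdc ρ h τ hτV hτρ)
        · rw [Finset.sdiff_insert]
          have := Finset.card_erase_lt_of_mem hσ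
          omega
      exact Relation.ReflTransGen.head hstep htail

lemma red {C : Finset (Finset ℕ)} {v : ℕ} (hC : IsComplex C) (hv : ({v} : Finset ℕ) ∈ C)
    (hne : NonEvasive (sd (lkv v C))) : NERed (sd C) (sd (delv v C)) := by
  rw [← E_empty (C := C), ← E_full (C := C) (v := v)]
  exact red_aux hC hv hne _ ∅ (Finset.empty_subset _) (by simp) le_rfl

lemma ne_of_red {C C' : Finset (Finset ℕ)} (h : NERed C C') (h' : NonEvasive C') :
    NonEvasive C := by
  induction h using Relation.ReflTransGen.head_induction_on with
  | refl => exact h'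
  | head hstep _ ih =>
    obtain ⟨v, hv, hlk, rfl⟩ := hstep
    exact NonEvasive.step _ v hv hlk ih

lemma sd_point (v : ℕ) : sd {({v} : Finset ℕ)} = {({fenc {v}} : Finset ℕ)} := by
  ext s
  rw [mem_sd, Finset.mem_singleton]
  constructor
  · rintro ⟨S, h1, h2, _, rfl⟩
    have : S = {({v} : Finset ℕ)} :=
      Finset.Subset.antisymm h1 (Finset.singleton_subset_iff.2 (by
        obtain ⟨τ, hτ⟩ := h2
        have := Finset.mem_singleton.1 (h1 hτ)
        exact this ▸ hτ))
    rw [this, Finset.image_singleton]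
  · rintro rfl
    exact ⟨{({v} : Finset ℕ)}, le_rfl, ⟨{v}, by simp⟩, by intro x hx y hy; simp_all, by simp⟩

lemma sd_ne {C : Finset (Finset ℕ)} (h : NonEvasive C) : IsComplex C → NonEvasive (sd C) := by
  induction h with
  | point v => intro _; rw [sd_point]; exact NonEvasive.point _
  | step C v hv hlk hdel ihlk ihdel =>
    intro hC
    exact ne_of_red (red hC hv (ihlk (isComplex_lkv hC))) (ihdel (isComplex_delv hC))

lemma red_sd {C C' : Finset (Finset ℕ)} (h : NERed C C') (hC : IsComplex C) :
    IsComplex C' ∧ NERed (sd C) (sd C') := by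
  induction h with
  | refl => exact ⟨hC, Relation.ReflTransGen.refl⟩
  | tail h1 h2 ih =>
    obtain ⟨hb, hr⟩ := ih
    obtain ⟨v, hv, hlk, rfl⟩ := h2
    exact ⟨isComplex_delv hb, hr.trans (red hb hv (sd_ne hlk (isComplex_lkv hb)))⟩

lemma isComplex_iter {C : Finset (Finset ℕ)} (hC : IsComplex C) (m : ℕ) :
    IsComplex (sd^[m] C) := by
  induction m with
  | zero => exact hC
  | succ m ih => rw [Function.iterate_succ_apply']; exact isComplex_sd

/-- **Derived subdivisions preserve NE-reductions.** If `C ↘_NE C'`, then for every `m ≥ 0`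
we have `sd^m C ↘_NE sd^m C'`; in particular the derived subdivision of a non-evasive complex
is non-evasive. -/
theorem sd_iterate_NERed (C C' : Finset (Finset ℕ)) (hC : IsComplex C) (hC' : IsComplex C')
    (h : NERed C C') (m : ℕ) :
    NERed (sd^[m] C) (sd^[m] C') ∧ (NonEvasive C → NonEvasive (sd C)) := by
  constructor
  · induction m with
    | zero => exact h
    | succ m ih =>
      rw [Function.iterate_succ_apply', Function.iterate_succ_apply']
      exact (red_sd ih (isComplex_iter hC m)).2
  · exact fun hne => sd_ne hne hC
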